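/- arXiv:1208.2500 — 7 statements merged into one kernel-verified Lean document; each statement's English description precedes it below -/
import Mathlib

section
/- Let m > 1 and let Z_m = { α ∈ F_{q^m} : F_q(α) = F_{q^m} }. For a ∈ F_q, the set V_m(a) = { α ∈ Z_m : X² + aX − α is irreducible over F_{q^m} } is empty if and only if q is even and a = 0. -/
/-! Every `α` outside the image of `x ↦ x² + A x` makes `X² + A X - α` irreducible. Unless the
characteristic is `2` and `A = 0`, the involution `x ↦ -A - x` preserving this map has at most one
fixed point, so the image has at most `(q^m + 1) / 2` elements. An element that does not generate
`F_{q^m}` lies in a maximal subfield `F_{q^{m/p}}` (`p` a prime divisor of `m`), so there are at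
most `∑ p, q^{m/p} ≤ q^m / 2` of them. Since `0` is counted twice, some generator lies outside the
image. In characteristic `2` with `A = 0` the map is squaring, which is onto. -/

open Polynomial Finset Module IntermediateField

theorem Finset.two_mul_card_image_le_card_add_one {α β : Type*} [Fintype α] [DecidableEq β]
    (f : α → β) (σ : α → α) (c : α) (hσ : ∀ x, f (σ x) = f x) (hfix : ∀ x, σ x = x → x = c) :
    2 * #(univ.image f) ≤ Fintype.card α + 1 := by
  have hc : f c ∈ univ.image f := mem_image_of_mem f (mem_univ c)
  have hfibres : 2 * #((univ.image f).erase (f c)) ≤ #{x | f x ≠ f c} := by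
    refine mul_card_image_le_card_of_maps_to (f := f) (fun x hx => ?_) 2 fun y hy => ?_
    · simp_all
    obtain ⟨hyc, x, -, rfl⟩ := by simpa using hy
    have hxc : x ≠ c := by rintro rfl; exact hyc rfl
    exact one_lt_card.mpr ⟨x, by simp [hyc], σ x, by simp [hσ, hyc], (hxc <| hfix x ·.symm)⟩
  have hc_notMem : c ∉ ({x | f x ≠ f c} : Finset α) := by simp
  have := card_lt_univ_of_notMem hc_notMem
  rw [card_erase_of_mem hc] at hfibres
  have := card_pos.mpr ⟨_, hc⟩
  omega

theorem two_mul_card_image_sq_add_mul_le {E : Type*} [Field E] [Fintype E] [DecidableEq E]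
    {A : E} (h : ringChar E ≠ 2 ∨ A ≠ 0) :
    2 * #(univ.image fun x : E => x ^ 2 + A * x) ≤ Fintype.card E + 1 := by
  refine two_mul_card_image_le_card_add_one _ (fun x => -A - x) (-A / 2) (fun x => by ring)
    fun x hx => ?_
  have h2x : 2 * x = -A := by linear_combination -hx
  by_cases h2 : (2 : E) = 0
  · have hA : A = 0 := by simpa [h2] using h2x.symm
    exact absurd hA (h.resolve_left fun hE => Ring.two_ne_zero hE h2)
  · rw [eq_div_iff h2, mul_comm, h2x]

theorem irreducible_X_sq_add_C_mul_X_sub_C_iff {K : Type*} [Field K] (A α : K) :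
    Irreducible (X ^ 2 + C A * X - C α) ↔ ∀ x, x ^ 2 + A * x ≠ α := by
  have hdeg : (X ^ 2 + C A * X - C α).natDegree = 2 := by compute_degree!
  have hne : X ^ 2 + C A * X - C α ≠ 0 := fun h => by simp [h] at hdeg
  rw [irreducible_iff_roots_eq_zero_of_degree_le_three hdeg.ge (by omega),
    Multiset.eq_zero_iff_forall_notMem]
  simp [mem_roots hne, sub_eq_zero]

theorem Nat.exists_mem_primeFactors_dvd_div {d m : ℕ} (hd : d ∣ m) (hdm : d ≠ m) (hm : m ≠ 0) :
    ∃ p ∈ m.primeFactors, d ∣ m / p := by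
  obtain ⟨c, rfl⟩ := hd
  obtain ⟨p, hp, e, rfl⟩ := Nat.exists_prime_and_dvd (fun h : c = 1 => hdm (by simp [h]))
  refine ⟨p, Nat.mem_primeFactors.mpr ⟨hp, ⟨d * e, by ring⟩, hm⟩, e, ?_⟩
  rw [mul_left_comm, Nat.mul_div_cancel_left _ hp.pos]

theorem Nat.card_primeFactors_le_div_two (m : ℕ) : #m.primeFactors ≤ m / 2 := by
  rcases eq_or_ne m 0 with rfl | hm
  · simp
  calc #m.primeFactors ≤ #(Icc 1 (m / 2)) := by
        refine card_le_card_of_injOn (m / ·) (fun p hp => ?_) fun p hp p' hp' h => ?_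
        · have hp := Nat.mem_primeFactors.mp hp
          simp only [coe_Icc, Set.mem_Icc]
          exact ⟨Nat.div_pos (Nat.le_of_dvd (by omega) hp.2.1) hp.1.pos,
            Nat.div_le_div_left hp.1.two_le two_pos⟩
        · rw [← Nat.div_div_self (Nat.dvd_of_mem_primeFactors hp) hm,
            ← Nat.div_div_self (Nat.dvd_of_mem_primeFactors hp') hm]
          exact congrArg (m / ·) h
    _ = m / 2 := by simp

theorem Nat.two_mul_sum_primeFactors_pow_div_le {q : ℕ} (hq : 2 ≤ q) (m : ℕ) :
    2 * ∑ p ∈ m.primeFactors, q ^ (m / p) ≤ q ^ m := by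
  set t := m / 2
  have hsum : ∑ p ∈ m.primeFactors, q ^ (m / p) ≤ t * q ^ t := by
    calc ∑ p ∈ m.primeFactors, q ^ (m / p) ≤ ∑ _p ∈ m.primeFactors, q ^ t :=
          sum_le_sum fun p hp => Nat.pow_le_pow_right (by omega)
            (Nat.div_le_div_left (Nat.prime_of_mem_primeFactors hp).two_le two_pos)
      _ ≤ t * q ^ t := by
          rw [sum_const, smul_eq_mul]
          exact Nat.mul_le_mul_right _ (Nat.card_primeFactors_le_div_two m)
  have h2t : 2 * t ≤ q ^ t := by
    calc 2 * t ≤ 2 ^ t := by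
          rcases Nat.eq_zero_or_pos t with ht | ht
          · simp [ht]
          · have := @Nat.lt_two_pow_self (t - 1)
            rw [show t = t - 1 + 1 by omega, pow_succ]
            omega
      _ ≤ q ^ t := Nat.pow_le_pow_left hq t
  calc 2 * ∑ p ∈ m.primeFactors, q ^ (m / p) ≤ 2 * t * q ^ t := by rw [mul_assoc]; omega
    _ ≤ q ^ t * q ^ t := Nat.mul_le_mul_right _ h2t
    _ = q ^ (2 * t) := by ring
    _ ≤ q ^ m := Nat.pow_le_pow_right (by omega) (by omega)

theorem card_filter_pow_eq_self_le {K : Type*} [Field K] [Fintype K] [DecidableEq K] {n : ℕ}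
    (hn : 1 < n) : #{x : K | x ^ n = x} ≤ n := by
  have hne := FiniteField.X_pow_card_sub_X_ne_zero K hn
  calc #{x : K | x ^ n = x} ≤ (X ^ n - X : K[X]).natDegree :=
        card_le_degree_of_subset_roots fun x hx => by
          simp_all [mem_roots hne, sub_eq_zero]
    _ = n := FiniteField.X_pow_card_sub_X_natDegree_eq K hn

section AdjoinNeTop

variable {F E : Type*} [Field F] [Fintype F] [Field E] [Finite E] [Algebra F E]

theorem exists_mem_primeFactors_pow_eq_self_of_adjoin_ne_top {x : E} (hx : F⟮x⟯ ≠ ⊤) :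
    ∃ p ∈ (finrank F E).primeFactors, x ^ Fintype.card F ^ (finrank F E / p) = x := by
  set K := F⟮x⟯
  have : Fintype K := Fintype.ofFinite K
  have hdvd : finrank F K ∣ finrank F E := ⟨finrank K E, (finrank_mul_finrank F K E).symm⟩
  have hne : finrank F K ≠ finrank F E := fun h =>
    hx (eq_of_le_of_finrank_eq le_top (by rw [h, finrank_top']))
  obtain ⟨p, hp, j, hj⟩ := Nat.exists_mem_primeFactors_dvd_div hdvd hne finrank_pos.ne'
  refine ⟨p, hp, ?_⟩
  have := FiniteField.pow_card_pow j (⟨x, mem_adjoin_simple_self F x⟩ : K)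
  rw [card_eq_pow_finrank (K := F), ← pow_mul, ← hj] at this
  exact congrArg Subtype.val this

variable [Fintype E]

open Classical in
theorem card_filter_adjoin_ne_top_le :
    #{x : E | F⟮x⟯ ≠ ⊤} ≤
      ∑ p ∈ (finrank F E).primeFactors, Fintype.card F ^ (finrank F E / p) := by
  calc #{x : E | F⟮x⟯ ≠ ⊤}
      ≤ #((finrank F E).primeFactors.biUnion
          fun p => {x : E | x ^ Fintype.card F ^ (finrank F E / p) = x}) :=
        card_le_card fun x hx => by
          simpa using exists_mem_primeFactors_pow_eq_self_of_adjoin_ne_top (mem_filter.mp hx).2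
    _ ≤ _ := card_biUnion_le.trans <| sum_le_sum fun p hp =>
        card_filter_pow_eq_self_le <| Nat.one_lt_pow
          (Nat.div_pos (Nat.le_of_dvd finrank_pos (Nat.dvd_of_mem_primeFactors hp))
            (Nat.prime_of_mem_primeFactors hp).pos).ne' Fintype.one_lt_card

end AdjoinNeTop

theorem exists_adjoin_eq_top_forall_sq_add_mul_ne {F E : Type*} [Field F] [Fintype F] [Field E]
    [Fintype E] [Algebra F E] (hE : 1 < finrank F E) {A : E} (hA : ringChar E ≠ 2 ∨ A ≠ 0) :
    ∃ α : E, F⟮α⟯ = ⊤ ∧ ∀ x, x ^ 2 + A * x ≠ α := by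
  classical
  set I := univ.image fun x : E => x ^ 2 + A * x
  set S : Finset E := {x | F⟮x⟯ ≠ ⊤}
  have hI : 2 * #I ≤ Fintype.card E + 1 := two_mul_card_image_sq_add_mul_le hA
  have hS : 2 * #S ≤ Fintype.card E := by
    rw [card_eq_pow_finrank (K := F)]
    exact (Nat.mul_le_mul_left 2 card_filter_adjoin_ne_top_le).trans
      (Nat.two_mul_sum_primeFactors_pow_div_le Fintype.one_lt_card _)
  have h0 : (0 : E) ∈ I ∩ S := by
    refine mem_inter.mpr ⟨mem_image.mpr ⟨0, mem_univ _, by ring⟩, mem_filter.mpr ⟨mem_univ _, ?_⟩⟩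
    rw [adjoin_zero, Ne, bot_eq_top_iff_finrank_eq_one]
    exact hE.ne'
  have hIS : #(I ∪ S) < #(univ : Finset E) := by
    have := card_union_add_card_inter I S
    have := card_pos.mpr ⟨0, h0⟩
    rw [card_univ]
    omega
  obtain ⟨α, -, hα⟩ := exists_mem_notMem_of_card_lt_card hIS
  simp only [mem_union, mem_image, mem_univ, true_and, mem_filter, not_or, not_exists, not_not,
    I, S] at hα
  exact ⟨α, hα.2, hα.1⟩

theorem Vm_empty_iff_general (q m : ℕ) (hm : 1 < m)
    (F : Type*) [Field F] [Fintype F] (hF : Fintype.card F = q)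
    (E : Type*) [Field E] [Fintype E] [Algebra F E] (hE : Fintype.card E = q ^ m)
    (a : F) :
    {α : E | IntermediateField.adjoin F {α} = ⊤ ∧
        Irreducible (X ^ 2 + C (algebraMap F E a) * X - C α)} = ∅ ↔
      (Even q ∧ a = 0) := by
  have hrank : finrank F E = m := by
    have := card_eq_pow_finrank (K := F) (V := E)
    rw [hE, hF] at this
    exact Nat.pow_right_injective (hF ▸ Fintype.one_lt_card) this.symm
  have hchar : ringChar E = 2 ↔ Even q := by
    rw [← Algebra.ringChar_eq F E, FiniteField.even_card_iff_char_two, hF, Nat.even_iff]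
  simp only [irreducible_X_sq_add_C_mul_X_sub_C_iff, Set.eq_empty_iff_forall_notMem,
    Set.mem_ofPred_eq]
  constructor
  · intro hV
    by_contra h
    refine Exists.elim (exists_adjoin_eq_top_forall_sq_add_mul_ne (hrank ▸ hm) ?_) hV
    rw [ne_eq, hchar, ne_eq, map_eq_zero]
    tauto
  · rintro ⟨hq, rfl⟩ α ⟨-, hα⟩
    obtain ⟨β, rfl⟩ := FiniteField.isSquare_of_char_two (hchar.mpr hq) α
    exact hα β (by simp [sq])

/-- For `m > 1`, the set `V_m(a) = { α : F_q(α) = F_{q^m}, X² + aX − α irreducible over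
F_{q^m} }` is empty iff `q` is even and `a = 0`. -/
theorem Vm_empty_iff (q m : ℕ) (hq : 1 < q) (hm : 1 < m)
    (F : Type*) [Field F] [Fintype F] (hF : Fintype.card F = q)
    (E : Type*) [Field E] [Fintype E] [Algebra F E] (hE : Fintype.card E = q ^ m)
    (a : F) :
    {α : E | IntermediateField.adjoin F {α} = ⊤ ∧
        Irreducible (X ^ 2 + C (algebraMap F E a) * X - C α)} = ∅ ↔
      (Even q ∧ a = 0) :=
  Vm_empty_iff_general q m hm F hF E hE a
end

section
/- Let m,n be positive integers with mn > 1 and let f ∈ F_q[X] be irreducible of degree mn. Suppose f(X) = g₁(X)^m · h₁(X^n / g₁(X)) · (clearing denominators appropriately) = g₂(X)^m · h₂(X^n / g₂(X)), where for i = 1,2, hᵢ is monic of degree m with hᵢ(0) ≠ 0, and gᵢ has degree at most n−1 with gᵢ(0) = 1. Then g₁ = g₂ and h₁ = h₂. -/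
open Polynomial Finset

/-- `g(X)^m · h(X^n / g(X))` with denominators cleared:
`∑_{j=0}^{m} h_j X^{nj} g(X)^{m-j}`. -/
noncomputable def tsrComp {F : Type*} [Field F] (m n : ℕ) (g h : Polynomial F) :
    Polynomial F :=
  ∑ j ∈ Finset.range (m + 1), C (h.coeff j) * X ^ (n * j) * g ^ (m - j)

/-!
Let `α` be the root of `f` in `K = F[X]/(f)`, so `[K : F] = mn`. A decomposition
`f = g^m h(X^n/g)` yields `β = α^n / g(α)` with `h(β) = 0`. Over `F(β)`, `α` is a root of
`X^n - β g(X)`, so `[K : F(β)] ≤ n`, which forces `[F(β) : F] = m`: `h` is the minimal polynomial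
of `β`, and `β` is fixed by `σ = Frob^m`. Hence `β₁ g₁ - β₂ g₂`, of degree `< n`, vanishes at the
`n` distinct conjugates `σ^j α`, `j < n`; it is zero, and its constant term gives `β₁ = β₂`.
-/

open IntermediateField Module

section

variable {F K : Type*} [Field F] [CommRing K] [Algebra F K]

theorem aeval_tsrComp {m n : ℕ} {g h : F[X]} (hh : h.natDegree ≤ m) {x b : K}
    (hx : x ^ n = b * aeval x g) :
    aeval x (tsrComp m n g h) = aeval x g ^ m * aeval b h := by
  rw [tsrComp, map_sum, aeval_eq_sum_range' (Nat.lt_succ_of_le hh), Finset.mul_sum]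
  refine Finset.sum_congr rfl fun j hj => ?_
  have hjm : j ≤ m := Nat.lt_succ_iff.mp (Finset.mem_range.mp hj)
  rw [map_mul, map_mul, aeval_C, map_pow, aeval_X, map_pow, pow_mul, hx, Algebra.smul_def,
    ← Nat.sub_add_cancel hjm, pow_add, Nat.add_sub_cancel]
  ring

theorem pow_eq_mul_aeval_algHom_apply {n : ℕ} {g : F[X]} {x b : K} (φ : K →ₐ[F] K)
    (hb : φ b = b) (hx : x ^ n = b * aeval x g) : φ x ^ n = b * aeval (φ x) g := by
  rw [← map_pow, hx, map_mul, hb, aeval_algHom_apply]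

end

theorem Polynomial.eq_of_C_mul_eq_C_mul {R : Type*} [CommRing R] [IsDomain R] {a b : R}
    {p q : R[X]} (ha : a ≠ 0) (hp : p.coeff 0 = 1) (hq : q.coeff 0 = 1)
    (h : C a * p = C b * q) : a = b ∧ p = q := by
  have hab : a = b := by simpa [hp, hq] using congrArg (coeff · 0) h
  subst hab
  exact ⟨rfl, mul_left_cancel₀ (C_ne_zero.mpr ha) h⟩

theorem Polynomial.natDegree_X_pow_sub_C_mul {R : Type*} [CommRing R] [Nontrivial R] {n : ℕ}
    (b : R) {p : R[X]} (hp : p.natDegree < n) : (X ^ n - C b * p).natDegree = n := by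
  rw [natDegree_sub_eq_left_of_natDegree_lt] <;> rw [natDegree_X_pow]
  exact (natDegree_C_mul_le b p).trans_lt hp

section

variable {F K : Type*} [Field F] [Field K] [Algebra F K]

theorem finrank_eq_finrank_mul_natDegree_minpoly [FiniteDimensional F K] {α : K}
    (hα : F⟮α⟯ = ⊤) (L : IntermediateField F K) :
    finrank F K = finrank F L * (minpoly L α).natDegree := by
  rw [← Module.finrank_mul_finrank F L K, ← adjoin.finrank (IsIntegral.of_finite L α),
    adjoin_eq_top_of_adjoin_eq_top F hα, finrank_top']

theorem minpoly_eq_of_pow_eq_mul_aeval [FiniteDimensional F K] {m n : ℕ} {α β : K}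
    {g h : F[X]} (hα : F⟮α⟯ = ⊤) (hK : finrank F K = m * n) (hg : g.natDegree < n)
    (hαβ : α ^ n = β * aeval α g) (hh : h.Monic) (hhd : h.natDegree = m)
    (hβ : aeval β h = 0) : minpoly F β = h := by
  have hβi : IsIntegral F β := .of_finite F β
  refine (eq_of_monic_of_dvd_of_natDegree_le (minpoly.monic hβi) hh (minpoly.dvd F β hβ) ?_).symm
  set P : F⟮β⟯[X] := X ^ n - C (AdjoinSimple.gen F β) * g.map (algebraMap F F⟮β⟯)
  have hPd : P.natDegree = n := natDegree_X_pow_sub_C_mul _ (natDegree_map_le.trans_lt hg)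
  have hPα : aeval α P = 0 := by simp [P, hαβ, aeval_map_algebraMap]
  have hdeg : (minpoly F⟮β⟯ α).natDegree ≤ n := by
    refine hPd ▸ natDegree_le_of_dvd (minpoly.dvd _ _ hPα) ?_
    rintro hP0
    rw [hP0, natDegree_zero] at hPd
    omega
  have htower := finrank_eq_finrank_mul_natDegree_minpoly hα F⟮β⟯
  rw [hK, adjoin.finrank hβi] at htower
  rw [hhd]
  refine Nat.le_of_mul_le_mul_right ?_ (g.natDegree.zero_le.trans_lt hg)
  exact htower ▸ Nat.mul_le_mul_left _ hdeg

theorem exists_minpoly_eq_of_aeval_tsrComp_eq_zero [FiniteDimensional F K] {m n : ℕ} {α : K}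
    {g h : F[X]} (hα : F⟮α⟯ = ⊤) (hK : finrank F K = m * n) (hg0 : g ≠ 0)
    (hg : g.natDegree < n) (hh : h.Monic) (hhd : h.natDegree = m) (hh0 : h.coeff 0 ≠ 0)
    (hf : aeval α (tsrComp m n g h) = 0) :
    ∃ β, β ≠ 0 ∧ α ^ n = β * aeval α g ∧ minpoly F β = h := by
  have hgα : aeval α g ≠ 0 := fun hgα => by
    have hdeg := adjoin.finrank (IsIntegral.of_finite F α)
    rw [hα, finrank_top', hK] at hdeg
    have hm : 0 < m := Nat.pos_of_mul_pos_right (hK ▸ finrank_pos : 0 < m * n)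
    have := natDegree_le_of_dvd (minpoly.dvd F α hgα) hg0
    have := Nat.le_mul_of_pos_left n hm
    omega
  have hαβ : α ^ n = α ^ n * (aeval α g)⁻¹ * aeval α g := (inv_mul_cancel_right₀ hgα _).symm
  have hβ : aeval (α ^ n * (aeval α g)⁻¹) h = 0 := by
    rwa [aeval_tsrComp hhd.le hαβ, mul_eq_zero, or_iff_right (pow_ne_zero _ hgα)] at hf
  refine ⟨_, fun hβ0 => hh0 ?_, hαβ, minpoly_eq_of_pow_eq_mul_aeval hα hK hg hαβ hh hhd hβ⟩
  rw [hβ0] at hβ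
  rwa [← map_eq_zero_iff _ (algebraMap F K).injective, coeff_zero_eq_aeval_zero']

end

section

variable {F K : Type*} [Field F] [Fintype F] [Field K] [Algebra F K]

theorem FiniteField.pow_card_pow_natDegree_minpoly {x : K} (hx : IsIntegral F x) :
    x ^ Fintype.card F ^ (minpoly F x).natDegree = x := by
  have hdvd := (minpoly.irreducible hx).natDegree_dvd_iff_dvd_X_pow_card_pow_sub_X.mp dvd_rfl
  have := aeval_eq_zero_of_dvd_aeval_eq_zero hdvd (minpoly.aeval F x)
  simpa [Nat.card_eq_fintype_card, sub_eq_zero] using this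

theorem FiniteField.injective_frobeniusAlgHom_pow_apply [Finite K] {α : K}
    (hα : Algebra.adjoin F {α} = ⊤) :
    Function.Injective fun i : Fin (finrank F K) => (frobeniusAlgHom F K ^ (i : ℕ)) α :=
  fun _ _ hij => (bijective_frobeniusAlgHom_pow F K).1 <|
    AlgHom.ext_of_adjoin_eq_top hα fun _ hx => (Set.mem_singleton_iff.mp hx) ▸ hij

theorem eq_of_pow_eq_mul_aeval [Finite K] {m n : ℕ} {α β₁ β₂ : K} {g₁ g₂ : F[X]}
    (hα : Algebra.adjoin F {α} = ⊤) (hK : finrank F K = m * n)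
    (hβ₁ : β₁ ^ Fintype.card F ^ m = β₁) (hβ₂ : β₂ ^ Fintype.card F ^ m = β₂) (hβ₁0 : β₁ ≠ 0)
    (hg₁ : g₁.natDegree < n) (hg₂ : g₂.natDegree < n)
    (hg₁0 : g₁.coeff 0 = 1) (hg₂0 : g₂.coeff 0 = 1)
    (h₁ : α ^ n = β₁ * aeval α g₁) (h₂ : α ^ n = β₂ * aeval α g₂) : β₁ = β₂ ∧ g₁ = g₂ := by
  have hm : 0 < m := Nat.pos_of_mul_pos_right (hK ▸ finrank_pos : 0 < m * n)
  set σ := FiniteField.frobeniusAlgHom F K ^ m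
  have hσ : ∀ x : K, x ^ Fintype.card F ^ m = x → ∀ j : ℕ, (σ ^ j) x = x := fun x hx j => by
    rw [AlgHom.coe_pow]
    refine Function.iterate_fixed ?_ j
    rwa [AlgHom.coe_pow, FiniteField.coe_frobeniusAlgHom, pow_iterate]
  set conj : Fin n → K := fun j => (σ ^ (j : ℕ)) α
  have hconj : Function.Injective conj := by
    intro i j hij
    have := FiniteField.injective_frobeniusAlgHom_pow_apply hα
      (a₁ := ⟨m * i, hK ▸ Nat.mul_lt_mul_of_pos_left i.2 hm⟩)
      (a₂ := ⟨m * j, hK ▸ Nat.mul_lt_mul_of_pos_left j.2 hm⟩)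
      (by simpa [conj, σ, ← pow_mul] using hij)
    exact Fin.ext (Nat.eq_of_mul_eq_mul_left hm (Fin.mk.inj this))
  set R : K[X] := C β₁ * g₁.map (algebraMap F K) - C β₂ * g₂.map (algebraMap F K)
  have hR : R = 0 := by
    refine eq_zero_of_natDegree_lt_card_of_eval_eq_zero R hconj (fun j => ?_) ?_
    · rw [eval_sub, eval_mul, eval_mul, eval_C, eval_C, eval_map_algebraMap, eval_map_algebraMap,
        ← pow_eq_mul_aeval_algHom_apply _ (hσ _ hβ₁ j) h₁,
        ← pow_eq_mul_aeval_algHom_apply _ (hσ _ hβ₂ j) h₂, sub_self]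
    · rw [Fintype.card_fin]
      exact (natDegree_sub_le _ _).trans_lt (max_lt
        ((natDegree_C_mul_le _ _).trans_lt (natDegree_map_le.trans_lt hg₁))
        ((natDegree_C_mul_le _ _).trans_lt (natDegree_map_le.trans_lt hg₂)))
  obtain ⟨hβ, hg⟩ := eq_of_C_mul_eq_C_mul hβ₁0 (by simpa using hg₁0) (by simpa using hg₂0)
    (sub_eq_zero.mp hR)
  exact ⟨hβ, map_injective _ (algebraMap F K).injective hg⟩

end

theorem unique_decomposition_of_irreducible_general
    (F : Type*) [Field F] [Fintype F] (m n : ℕ) (hn : 0 < n)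
    (g₁ g₂ h₁ h₂ : Polynomial F)
    (hh₁ : h₁.Monic) (hh₁d : h₁.natDegree = m) (hh₁0 : h₁.coeff 0 ≠ 0)
    (hh₂ : h₂.Monic) (hh₂d : h₂.natDegree = m) (hh₂0 : h₂.coeff 0 ≠ 0)
    (hg₁d : g₁.natDegree ≤ n - 1) (hg₁0 : g₁.coeff 0 = 1)
    (hg₂d : g₂.natDegree ≤ n - 1) (hg₂0 : g₂.coeff 0 = 1)
    (f : Polynomial F) (hfd : f.natDegree = m * n) (hirr : Irreducible f)
    (hf₁ : f = tsrComp m n g₁ h₁) (hf₂ : f = tsrComp m n g₂ h₂) :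
    g₁ = g₂ ∧ h₁ = h₂ := by
  have : Fact (Irreducible f) := ⟨hirr⟩
  have : FiniteDimensional F (AdjoinRoot f) := (AdjoinRoot.powerBasis hirr.ne_zero).finite
  have : Finite (AdjoinRoot f) := Module.finite_of_finite F
  have hK : finrank F (AdjoinRoot f) = m * n := by
    rw [← hfd]; exact finrank_quotient_span_eq_natDegree
  have hroot : ∀ {g h}, f = tsrComp m n g h → aeval (AdjoinRoot.root f) (tsrComp m n g h) = 0 :=
    fun hf => hf ▸ AdjoinRoot.aeval_eq f ▸ AdjoinRoot.mk_self
  have hg₁ : g₁.natDegree < n := by omega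
  have hg₂ : g₂.natDegree < n := by omega
  obtain ⟨β₁, hβ₁0, hαβ₁, rfl⟩ := exists_minpoly_eq_of_aeval_tsrComp_eq_zero
    (adjoin_root_eq_top f) hK (ne_of_apply_ne (coeff · 0) (by simp [hg₁0])) hg₁ hh₁ hh₁d hh₁0
    (hroot hf₁)
  obtain ⟨β₂, -, hαβ₂, rfl⟩ := exists_minpoly_eq_of_aeval_tsrComp_eq_zero
    (adjoin_root_eq_top f) hK (ne_of_apply_ne (coeff · 0) (by simp [hg₂0])) hg₂ hh₂ hh₂d hh₂0
    (hroot hf₂)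
  obtain ⟨rfl, rfl⟩ := eq_of_pow_eq_mul_aeval AdjoinRoot.adjoinRoot_eq_top hK
    (hh₁d ▸ FiniteField.pow_card_pow_natDegree_minpoly (.of_finite F β₁))
    (hh₂d ▸ FiniteField.pow_card_pow_natDegree_minpoly (.of_finite F β₂))
    hβ₁0 hg₁ hg₂ hg₁0 hg₂0 hαβ₁ hαβ₂
  exact ⟨rfl, rfl⟩

/-- An irreducible polynomial of degree `mn` is uniquely `(m,n)`-decomposable: if
`f = g₁^m h₁(X^n/g₁) = g₂^m h₂(X^n/g₂)` with the `hᵢ` monic of degree `m` with nonzero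
constant term and the `gᵢ` of degree at most `n−1` with constant term 1, then `g₁ = g₂`
and `h₁ = h₂`. -/
theorem unique_decomposition_of_irreducible
    (F : Type*) [Field F] [Fintype F] (m n : ℕ) (hm : 0 < m) (hn : 0 < n)
    (hmn : 1 < m * n)
    (g₁ g₂ h₁ h₂ : Polynomial F)
    (hh₁ : h₁.Monic) (hh₁d : h₁.natDegree = m) (hh₁0 : h₁.coeff 0 ≠ 0)
    (hh₂ : h₂.Monic) (hh₂d : h₂.natDegree = m) (hh₂0 : h₂.coeff 0 ≠ 0)
    (hg₁d : g₁.natDegree ≤ n - 1) (hg₁0 : g₁.coeff 0 = 1)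
    (hg₂d : g₂.natDegree ≤ n - 1) (hg₂0 : g₂.coeff 0 = 1)
    (f : Polynomial F) (hfd : f.natDegree = m * n) (hirr : Irreducible f)
    (hf₁ : f = tsrComp m n g₁ h₁) (hf₂ : f = tsrComp m n g₂ h₂) :
    g₁ = g₂ ∧ h₁ = h₂ :=
  unique_decomposition_of_irreducible_general F m n hn g₁ g₂ h₁ h₂ hh₁ hh₁d hh₁0 hh₂ hh₂d hh₂0 hg₁d
    hg₁0 hg₂d hg₂0 f hfd hirr hf₁ hf₂
end

section
/- Let f ∈ F_q[X] be monic irreducible of degree mn, where m,n ≥ 1. Then over F_{q^m}, f factors into exactly m distinct monic irreducible polynomials, each of degree n. -/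
/-!
Over a finite field `k`, a root `α` of an irreducible `g : k[X]` satisfies `α ^ (#k ^ j) = α`
exactly when `deg g ∣ j`: in `k[X]/(g)` this says that the `j`-th power of the Frobenius fixes the
generator, hence is trivial, and the Frobenius has order `deg g`. For a root of an irreducible
factor `g` of `f` over `E`, applying this over `F` to `f` and over `E = F_{q^m}` to `g` gives
`deg g ∣ j ↔ mn ∣ mj`, so `deg g = n`. As `f` is separable its factors over `E` are distinct, and
comparing degrees shows there are `m` of them.
-/

open Polynomial UniqueFactorizationMonoid

theorem Irreducible.root_pow_card_pow_eq_self_iff {k L : Type*} [Field k] [Fintype k] [Field L]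
    [Algebra k L] {g : k[X]} (hg : Irreducible g) {α : L} (hα : aeval α g = 0) (j : ℕ) :
    α ^ Fintype.card k ^ j = α ↔ g.natDegree ∣ j := by
  have := Fact.mk hg
  have : Module.Finite k (AdjoinRoot g) := (AdjoinRoot.powerBasis hg.ne_zero).finite
  have : Finite (AdjoinRoot g) := Module.finite_of_finite k
  set φ := FiniteField.frobeniusAlgHom k (AdjoinRoot g)
  let ι := AdjoinRoot.liftAlgHom g (Algebra.ofId k L) α hα
  have hι : ι (AdjoinRoot.root g) = α := AdjoinRoot.liftAlgHom_root ..
  have hφ : φ ^ j = 1 ↔ α ^ Fintype.card k ^ j = α := calc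
    φ ^ j = 1 ↔ (φ ^ j) (AdjoinRoot.root g) = AdjoinRoot.root g :=
      ⟨fun h ↦ by rw [h, AlgHom.one_apply],
        fun h ↦ AdjoinRoot.algHom_ext (h.trans (AlgHom.one_apply _).symm)⟩
    _ ↔ ι (AdjoinRoot.root g ^ Fintype.card k ^ j) = ι (AdjoinRoot.root g) := by
      rw [AlgHom.coe_pow, FiniteField.coe_frobeniusAlgHom, pow_iterate]
      exact (RingHom.injective (ι : AdjoinRoot g →+* L)).eq_iff.symm
    _ ↔ _ := by rw [map_pow, hι]
  rw [← hφ, ← orderOf_dvd_iff_pow_eq_one, FiniteField.orderOf_frobeniusAlgHom,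
    (AdjoinRoot.powerBasis hg.ne_zero).finrank, AdjoinRoot.powerBasis_dim]

theorem FiniteField.natDegree_eq_of_irreducible_dvd_map {F E : Type*} [Field F] [Fintype F]
    [Field E] [Fintype E] [Algebra F E] {f : F[X]} (hf : Irreducible f) {n : ℕ}
    (hdeg : f.natDegree = Module.finrank F E * n) {g : E[X]} (hg : Irreducible g)
    (hgf : g ∣ f.map (algebraMap F E)) : g.natDegree = n := by
  have := Fact.mk hg
  set α := AdjoinRoot.root g
  have hgα : aeval α g = 0 := AdjoinRoot.aeval_eq g ▸ AdjoinRoot.mk_self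
  have hfα : aeval α f = 0 := by
    obtain ⟨r, hr⟩ := hgf
    rw [← aeval_map_algebraMap E, hr, map_mul, hgα, zero_mul]
  have hdvd_iff : ∀ j, g.natDegree ∣ j ↔ n ∣ j := fun j ↦ by
    rw [← hg.root_pow_card_pow_eq_self_iff hgα, Module.card_eq_pow_finrank (K := F), ← pow_mul,
      hf.root_pow_card_pow_eq_self_iff hfα, hdeg, Nat.mul_dvd_mul_iff_left Module.finrank_pos]
  exact Nat.dvd_antisymm ((hdvd_iff n).2 dvd_rfl) ((hdvd_iff _).1 dvd_rfl)

theorem Polynomial.Monic.prod_normalizedFactors_toFinset {K : Type*} [Field K] [DecidableEq K]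
    {p : K[X]} (hp : p.Monic) (hsq : Squarefree p) :
    ∏ q ∈ (normalizedFactors p).toFinset, q = p := by
  rw [Finset.prod_eq_multiset_prod, Multiset.map_id', Multiset.toFinset_val,
    Multiset.dedup_eq_self.2 ((squarefree_iff_nodup_normalizedFactors hp.ne_zero).1 hsq),
    prod_normalizedFactors_eq hp.ne_zero, hp.normalize_eq_self]

theorem irreducible_factors_over_extension_general
    (q m n : ℕ) (hq : 1 < q) (hn : 0 < n)
    (F : Type*) [Field F] [Fintype F] (hF : Fintype.card F = q)
    (E : Type*) [Field E] [Fintype E] [Algebra F E] (hE : Fintype.card E = q ^ m)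
    (f : F[X]) (hmonic : f.Monic) (hirr : Irreducible f) (hdeg : f.natDegree = m * n) :
    ∃ S : Finset (Polynomial E), S.card = m ∧
      (∀ p ∈ S, p.Monic ∧ Irreducible p ∧ p.natDegree = n) ∧
      f.map (algebraMap F E) = ∏ p ∈ S, p := by
  classical
  have hfinrank : Module.finrank F E = m := by
    rw [Module.card_eq_pow_finrank (K := F), hF] at hE
    exact Nat.pow_right_injective hq hE
  set fE := f.map (algebraMap F E)
  have hfE : fE.Monic := hmonic.map _
  have hsq : Squarefree fE := (PerfectField.separable_of_irreducible hirr).map.squarefree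
  set S := (normalizedFactors fE).toFinset
  have hS : ∀ p ∈ S, p.Monic ∧ Irreducible p ∧ p.natDegree = n := fun p hp ↦ by
    obtain ⟨hirr_p, hmonic_p, hdvd⟩ :=
      (Polynomial.mem_normalizedFactors_iff hfE.ne_zero).1 (Multiset.mem_toFinset.1 hp)
    exact ⟨hmonic_p, hirr_p,
      FiniteField.natDegree_eq_of_irreducible_dvd_map hirr (hfinrank ▸ hdeg) hirr_p hdvd⟩
  have hprod : fE = ∏ p ∈ S, p := (hfE.prod_normalizedFactors_toFinset hsq).symm
  refine ⟨S, ?_, hS, hprod⟩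
  have hcard : S.card * n = m * n := calc
    S.card * n = ∑ p ∈ S, p.natDegree := (Finset.sum_const_nat fun p hp ↦ (hS p hp).2.2).symm
    _ = fE.natDegree := by rw [hprod, natDegree_prod _ _ fun p hp ↦ (hS p hp).2.1.ne_zero]
    _ = m * n := by rw [natDegree_map, hdeg]
  exact Nat.eq_of_mul_eq_mul_right hn hcard

/-- A monic irreducible polynomial of degree `mn` over `F_q` factors over `F_{q^m}` into
exactly `m` distinct monic irreducible polynomials, each of degree `n`. -/
theorem irreducible_factors_over_extension
    (q m n : ℕ) (hq : 1 < q) (hm : 0 < m) (hn : 0 < n)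
    (F : Type*) [Field F] [Fintype F] (hF : Fintype.card F = q)
    (E : Type*) [Field E] [Fintype E] [Algebra F E] (hE : Fintype.card E = q ^ m)
    (f : F[X]) (hmonic : f.Monic) (hirr : Irreducible f) (hdeg : f.natDegree = m * n) :
    ∃ S : Finset (Polynomial E), S.card = m ∧
      (∀ p ∈ S, p.Monic ∧ Irreducible p ∧ p.natDegree = n) ∧
      f.map (algebraMap F E) = ∏ p ∈ S, p :=
  irreducible_factors_over_extension_general q m n hq hn F hF E hE f hmonic hirr hdeg
end

section
/- Let h(Y) ∈ F_q[Y] be monic of degree m with h(0) ≠ 0, let g(X) ∈ F_q[X] have g(0) = 1 and deg g ≤ n−1, and suppose f(X) = g(X)^m h(X^n/g(X)) (clearing denominators) is irreducible over F_q. Then h is irreducible over F_q. -/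
open Polynomial Finset

namespace Polynomial

variable {F : Type*} [Field F] {n : ℕ} {g : F[X]}

@[simp]
lemma tsrComp_zero (d : ℕ) : tsrComp d n g 0 = 0 := by
  simp [tsrComp]

lemma tsrComp_natDegree_one : tsrComp (1 : F[X]).natDegree n g 1 = 1 := by
  simp [tsrComp]

lemma algebraMap_tsrComp (hg : g ≠ 0) (p : F[X]) :
    algebraMap F[X] (RatFunc F) (tsrComp p.natDegree n g p) =
      algebraMap F[X] (RatFunc F) g ^ p.natDegree *
        aeval (algebraMap F[X] (RatFunc F) X ^ n / algebraMap F[X] (RatFunc F) g) p := by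
  set φ := algebraMap F[X] (RatFunc F)
  have hφg : φ g ≠ 0 := (map_ne_zero_iff φ (IsFractionRing.injective _ _)).2 hg
  rw [aeval_eq_sum_range, Finset.mul_sum, tsrComp, map_sum]
  refine Finset.sum_congr rfl fun j hj => ?_
  have hj : j ≤ p.natDegree := Nat.lt_succ_iff.mp (Finset.mem_range.mp hj)
  have hpow : φ g ^ (p.natDegree - j) = φ g ^ p.natDegree / φ g ^ j := by
    rw [eq_div_iff (pow_ne_zero _ hφg), ← pow_add, Nat.sub_add_cancel hj]
  rw [Algebra.smul_def, IsScalarTower.algebraMap_apply F F[X] (RatFunc F), map_mul, map_mul,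
    map_pow, map_pow, hpow, div_pow, ← pow_mul, algebraMap_eq (R := F)]
  field_simp
  exact mul_comm _ _

lemma tsrComp_mul (hg : g ≠ 0) (a b : F[X]) :
    tsrComp (a * b).natDegree n g (a * b) =
      tsrComp a.natDegree n g a * tsrComp b.natDegree n g b := by
  rcases eq_or_ne a 0 with rfl | ha
  · simp
  rcases eq_or_ne b 0 with rfl | hb
  · simp
  apply IsFractionRing.injective F[X] (RatFunc F)
  rw [map_mul, algebraMap_tsrComp hg, algebraMap_tsrComp hg, algebraMap_tsrComp hg,
    natDegree_mul ha hb, map_mul, pow_add]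
  ring

noncomputable def tsrCompHom (n : ℕ) (g : F[X]) (hg : g ≠ 0) : F[X] →* F[X] where
  toFun p := tsrComp p.natDegree n g p
  map_one' := tsrComp_natDegree_one
  map_mul' := tsrComp_mul hg

lemma coeff_tsrComp_mul_natDegree (hgn : g.natDegree < n) (p : F[X]) :
    (tsrComp p.natDegree n g p).coeff (n * p.natDegree) = p.leadingCoeff := by
  rw [tsrComp, Finset.sum_range_succ, Nat.sub_self, pow_zero, mul_one, coeff_add,
    finsetSum_coeff, coeff_C_mul_X_pow, if_pos rfl, Finset.sum_eq_zero, zero_add]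
  · rfl
  intro j hj
  obtain ⟨k, hk⟩ := Nat.exists_eq_add_of_lt (Finset.mem_range.mp hj)
  apply coeff_eq_zero_of_natDegree_lt
  calc (C (p.coeff j) * X ^ (n * j) * g ^ (p.natDegree - j)).natDegree
      ≤ n * j + (k + 1) * g.natDegree := by
        refine natDegree_mul_le.trans (add_le_add ?_ ?_)
        · exact (natDegree_C_mul_le _ _).trans (natDegree_X_pow_le _)
        · exact natDegree_pow_le.trans (by rw [hk, show j + k + 1 - j = k + 1 by omega])
    _ < n * p.natDegree := by rw [hk]; nlinarith

lemma isUnit_of_isUnit_tsrComp (hn : 0 < n) (hgn : g.natDegree < n) {p : F[X]}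
    (hu : IsUnit (tsrComp p.natDegree n g p)) : IsUnit p := by
  rcases eq_or_ne p 0 with rfl | hp
  · simp at hu
  have htop : (tsrComp p.natDegree n g p).coeff (n * p.natDegree) ≠ 0 := by
    rw [coeff_tsrComp_mul_natDegree hgn]
    exact leadingCoeff_ne_zero.mpr hp
  have hdeg : n * p.natDegree = 0 :=
    Nat.le_zero.mp (natDegree_eq_zero_of_isUnit hu ▸ le_natDegree_of_ne_zero htop)
  rw [isUnit_iff_degree_eq_zero, degree_eq_natDegree hp,
    (mul_eq_zero.1 hdeg).resolve_left hn.ne', Nat.cast_zero]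

lemma isLocalHom_tsrCompHom (hn : 0 < n) (hg : g ≠ 0) (hgn : g.natDegree < n) :
    IsLocalHom (tsrCompHom n g hg) :=
  ⟨fun _ hu => isUnit_of_isUnit_tsrComp hn hgn hu⟩

end Polynomial

theorem irreducible_h_of_irreducible_decomposition_general
    (F : Type*) [Field F] (m n : ℕ) (hn : 0 < n)
    (g h : Polynomial F)
    (hhd : h.natDegree = m)
    (hgd : g.natDegree ≤ n - 1) (hg0 : g.coeff 0 = 1)
    (hirr : Irreducible (tsrComp m n g h)) :
    Irreducible h := by
  have hg : g ≠ 0 := fun hg => by simp [hg] at hg0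
  have : IsLocalHom (tsrCompHom n g hg) := Polynomial.isLocalHom_tsrCompHom hn hg (by omega)
  subst hhd
  exact hirr.of_map (f := tsrCompHom n g hg)

/-- If `f(X) = g(X)^m h(X^n/g(X))` is irreducible over `F_q`, where `h` is monic of
degree `m` with `h(0) ≠ 0` and `g(0) = 1`, `deg g ≤ n−1`, then `h` is irreducible. -/
theorem irreducible_h_of_irreducible_decomposition
    (F : Type*) [Field F] [Fintype F] (m n : ℕ) (hm : 0 < m) (hn : 0 < n)
    (g h : Polynomial F)
    (hh : h.Monic) (hhd : h.natDegree = m) (hh0 : h.coeff 0 ≠ 0)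
    (hgd : g.natDegree ≤ n - 1) (hg0 : g.coeff 0 = 1)
    (hirr : Irreducible (tsrComp m n g h)) :
    Irreducible h :=
  irreducible_h_of_irreducible_decomposition_general F m n hn g h hhd hgd hg0 hirr
end

section
/- Let λ ∈ F_{q^m} with F_q(λ) = F_{q^m}, and let g ∈ F_q[X] with g(0) = 1 and deg g ≤ n−1. If X^n − λ·g(X) is irreducible over F_{q^m}, then the product ∏_{i=0}^{m−1} (X^n − λ^{q^i} g(X)) is an irreducible polynomial of degree mn in F_q[X]. -/
/-!
Let `h = X^n − λ g`. The `q`-power Frobenius, acting on coefficients, sends the conjugate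
`X^n − λ^{q^i} g` to `X^n − λ^{q^{i+1}} g` and `λ^{q^m} = λ`, so it fixes the product `P` of the
`m` conjugates; hence `P` has coefficients in `F_q` and is the image of a monic `f` of degree `mn`.
A root `α` of `h` satisfies `λ = α^n / g(α)` (with `g(α) ≠ 0` because `g(0) ≠ 0`), so `F_q(α)`
contains `F_q(λ) = F_{q^m}` and therefore equals `F_{q^m}(α)`, of degree `mn` over `F_q`.
Since `f(α) = 0`, `f` is the minimal polynomial of `α`, hence irreducible.
-/

open Polynomial IntermediateField

theorem map_prod_range_eq_self_of_map_eq_succ {M G : Type*} [CommMonoid M] [FunLike G M M]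
    [MonoidHomClass G M M] (σ : G) {t : ℕ → M} {m : ℕ} (hσ : ∀ i, σ (t i) = t (i + 1))
    (hm : t m = t 0) : σ (∏ i ∈ Finset.range m, t i) = ∏ i ∈ Finset.range m, t i := by
  rw [map_prod]
  simp only [hσ]
  cases m with
  | zero => rfl
  | succ k => rw [Finset.prod_range_succ, hm, Finset.prod_range_succ']

namespace Polynomial

variable {R : Type*} [CommRing R] {g : R[X]} {n : ℕ}

theorem monic_X_pow_sub_C_mul (hg : g.natDegree < n) (a : R) : (X ^ n - C a * g).Monic :=
  monic_X_pow_sub (degree_le_natDegree.trans_lt (WithBot.coe_lt_coe.2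
    ((natDegree_C_mul_le a g).trans_lt hg)))

theorem natDegree_X_pow_sub_C_mul_s9 [Nontrivial R] (hg : g.natDegree < n) (a : R) :
    (X ^ n - C a * g).natDegree = n := by
  have hlt : (C a * g).natDegree < (X ^ n : R[X]).natDegree := by
    rw [natDegree_X_pow]
    exact (natDegree_C_mul_le a g).trans_lt hg
  rw [natDegree_sub_eq_left_of_natDegree_lt hlt, natDegree_X_pow]

end Polynomial

namespace FiniteField

theorem mem_range_of_pow_card_eq {F L : Type*} [Field F] [Fintype F] [CommRing L] [IsDomain L]
    [Algebra F L] {x : L} (hx : x ^ Fintype.card F = x) : x ∈ (algebraMap F L).range := by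
  have hq : 1 < Fintype.card F := Fintype.one_lt_card
  have hsplits : (X ^ Fintype.card F - X : F[X]).Splits := by
    rw [splits_iff_card_roots, roots_X_pow_card_sub_X, X_pow_card_sub_X_natDegree_eq F hq]
    rfl
  exact hsplits.mem_range_of_isRoot (X_pow_card_sub_X_ne_zero F hq) (by simp [hx])

theorem lifts_of_map_frobeniusAlgHom_eq {F L : Type*} [Field F] [Fintype F] [CommRing L]
    [IsDomain L] [Algebra F L] {p : L[X]} (hp : p.map (frobeniusAlgHom F L).toRingHom = p) :
    p ∈ lifts (algebraMap F L) :=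
  (lifts_iff_coeff_lifts p).2 fun k ↦
    mem_range_of_pow_card_eq (by simpa using congr_arg (coeff · k) hp)

theorem map_frobeniusAlgHom_X_pow_sub_C_mul {F E : Type*} [Field F] [Fintype F] [CommRing E]
    [Algebra F E] (n : ℕ) (a : E) (g : F[X]) :
    (X ^ n - C a * g.map (algebraMap F E)).map (frobeniusAlgHom F E).toRingHom =
      X ^ n - C (a ^ Fintype.card F) * g.map (algebraMap F E) := by
  simp [Polynomial.map_map]

theorem exists_monic_map_eq_prod_conjugates {F E : Type*} [Field F] [Fintype F] [CommRing E]
    [IsDomain E] [Algebra F E] {m n : ℕ} {lam : E} (hlam : lam ^ Fintype.card F ^ m = lam)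
    {g : F[X]} (hg : g.natDegree < n) :
    ∃ f : F[X], f.Monic ∧ f.natDegree = m * n ∧ f.map (algebraMap F E) =
      ∏ i ∈ Finset.range m, (X ^ n - C (lam ^ Fintype.card F ^ i) * g.map (algebraMap F E)) := by
  set t : ℕ → E[X] := fun i ↦ X ^ n - C (lam ^ Fintype.card F ^ i) * g.map (algebraMap F E)
  have hgE : (g.map (algebraMap F E)).natDegree < n := natDegree_map_le.trans_lt hg
  have ht : ∀ i ∈ Finset.range m, (t i).Monic := fun i _ ↦ monic_X_pow_sub_C_mul hgE _
  have hfixed : (∏ i ∈ Finset.range m, t i).map (frobeniusAlgHom F E).toRingHom =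
      ∏ i ∈ Finset.range m, t i := by
    refine map_prod_range_eq_self_of_map_eq_succ (mapRingHom _) (fun i ↦ ?_)
      (by simp only [t, pow_zero, pow_one, hlam])
    simp only [coe_mapRingHom, t, map_frobeniusAlgHom_X_pow_sub_C_mul, ← pow_mul, ← pow_succ]
  obtain ⟨f, hf_map, hf_deg, hf_monic⟩ := lifts_and_natDegree_eq_and_monic
    (lifts_of_map_frobeniusAlgHom_eq hfixed) (monic_prod_of_monic _ _ ht)
  refine ⟨f, hf_monic, ?_, hf_map⟩
  rw [hf_deg, natDegree_prod_of_monic _ _ ht]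
  simp only [t, natDegree_X_pow_sub_C_mul_s9 hgE, Finset.sum_const, Finset.card_range, smul_eq_mul]

end FiniteField

theorem IntermediateField.adjoin_simple_eq_top_of_tower {F E L : Type*} [Field F] [Field E]
    [Field L] [Algebra F E] [Algebra E L] [Algebra F L] [IsScalarTower F E L] {lam : E}
    (hlam : F⟮lam⟯ = ⊤) {α : L} (hα : E⟮α⟯ = ⊤) (hmem : algebraMap E L lam ∈ F⟮α⟯) :
    F⟮α⟯ = ⊤ := by
  have hrange : Set.range (algebraMap E L) ⊆ F⟮α⟯ := by
    rintro _ ⟨e, rfl⟩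
    have he : IsScalarTower.toAlgHom F E L e ∈ F⟮lam⟯.map (IsScalarTower.toAlgHom F E L) :=
      ⟨e, hlam ▸ trivial, rfl⟩
    rw [adjoin_map, Set.image_singleton] at he
    exact adjoin_simple_le_iff.2 hmem he
  rw [eq_top_iff]
  intro x _
  have hx : x ∈ E⟮α⟯.toSubfield := hα ▸ trivial
  rw [adjoin_toSubfield] at hx
  exact Subfield.closure_le (t := F⟮α⟯.toSubfield) |>.2
    (Set.union_subset hrange (Set.singleton_subset_iff.2 (mem_adjoin_simple_self F α))) hx

theorem algebraMap_mem_adjoin_simple_of_aeval_eq_zero {F E L : Type*} [Field F] [Field E]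
    [Field L] [Algebra F E] [Algebra E L] [Algebra F L] [IsScalarTower F E L] {g : F[X]}
    (hg0 : g.coeff 0 ≠ 0) {n : ℕ} {lam : E} {α : L}
    (hα : aeval α (X ^ n - C lam * g.map (algebraMap F E)) = 0) :
    algebraMap E L lam ∈ F⟮α⟯ := by
  have hrel : α ^ n = algebraMap E L lam * aeval α g := by
    simpa [sub_eq_zero, aeval_map_algebraMap] using hα
  have hgα : aeval α g ≠ 0 := by
    intro hz
    have hα0 : α = 0 := eq_zero_of_pow_eq_zero (by rw [hrel, hz, mul_zero])
    simp [hα0, aeval_def, eval₂_at_zero, hg0] at hz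
  have hgα_mem : aeval α g ∈ F⟮α⟯ :=
    algebra_adjoin_le_adjoin F {α} (aeval_mem_adjoin_singleton F α)
  rw [eq_div_of_mul_eq hgα hrel.symm]
  exact div_mem (pow_mem (mem_adjoin_simple_self F α) n) hgα_mem

theorem minpoly.eq_of_natDegree_eq_finrank {F L : Type*} [Field F] [Field L] [Algebra F L]
    [FiniteDimensional F L] {α : L} (hα : F⟮α⟯ = ⊤) {f : F[X]} (hf : f.Monic)
    (hfα : Polynomial.aeval α f = 0) (hdeg : f.natDegree = Module.finrank F L) :
    f = minpoly F α := by
  have hint : IsIntegral F α := .of_finite F α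
  have hmin : (minpoly F α).natDegree = Module.finrank F L := by
    rw [← adjoin.finrank hint, hα, finrank_top']
  exact eq_of_monic_of_dvd_of_natDegree_le (minpoly.monic hint) hf (minpoly.dvd F α hfα)
    (by rw [hdeg, hmin])

/-- If `λ` generates `F_{q^m}` over `F_q`, `g ∈ F_q[X]` has `g(0) = 1` and
`deg g ≤ n−1`, and `X^n − λ·g(X)` is irreducible over `F_{q^m}`, then
`∏_{i=0}^{m−1} (X^n − λ^{q^i} g(X))` is (the image of) an irreducible polynomial of
degree `mn` over `F_q`. -/
theorem prod_conjugates_irreducible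
    (q m n : ℕ) (hq : 1 < q) (hm : 0 < m) (hn : 0 < n)
    (F : Type*) [Field F] [Fintype F] (hF : Fintype.card F = q)
    (E : Type*) [Field E] [Fintype E] [Algebra F E] (hE : Fintype.card E = q ^ m)
    (lam : E) (hlam : IntermediateField.adjoin F {lam} = ⊤)
    (g : F[X]) (hg0 : g.coeff 0 = 1) (hgd : g.natDegree ≤ n - 1)
    (hirr : Irreducible (X ^ n - C lam * g.map (algebraMap F E))) :
    ∃ f : F[X], Irreducible f ∧ f.natDegree = m * n ∧
      f.map (algebraMap F E) =
        ∏ i ∈ Finset.range m, (X ^ n - C (lam ^ q ^ i) * g.map (algebraMap F E)) := by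
  subst hF
  have hgn : g.natDegree < n := by omega
  obtain ⟨f, hf_monic, hf_deg, hf_map⟩ :=
    FiniteField.exists_monic_map_eq_prod_conjugates (m := m) (hE ▸ FiniteField.pow_card lam) hgn
  set h := X ^ n - C lam * g.map (algebraMap F E)
  have : Fact (Irreducible h) := ⟨hirr⟩
  set α := AdjoinRoot.root h
  have hα : aeval α h = 0 := by rw [AdjoinRoot.aeval_eq, AdjoinRoot.mk_self]
  have hh_dvd : h ∣ f.map (algebraMap F E) := by
    rw [hf_map]
    simpa using Finset.dvd_prod_of_mem
      (fun i ↦ X ^ n - C (lam ^ Fintype.card F ^ i) * g.map (algebraMap F E))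
      (Finset.mem_range.2 hm)
  have hfα : aeval α f = 0 := by
    rw [← aeval_map_algebraMap E]
    exact aeval_eq_zero_of_dvd_aeval_eq_zero hh_dvd hα
  have hgen : F⟮α⟯ = ⊤ := adjoin_simple_eq_top_of_tower hlam (adjoin_root_eq_top h)
    (algebraMap_mem_adjoin_simple_of_aeval_eq_zero (by simp [hg0]) hα)
  have : FiniteDimensional E (AdjoinRoot h) := (AdjoinRoot.powerBasis hirr.ne_zero).finite
  have : FiniteDimensional F (AdjoinRoot h) := .trans F E _
  have hfinrank : Module.finrank F (AdjoinRoot h) = m * n := by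
    have hFE : Module.finrank F E = m :=
      Nat.pow_right_injective hq ((Module.card_eq_pow_finrank (K := F)).symm.trans hE)
    have hEL : Module.finrank E (AdjoinRoot h) = n := by
      rw [(AdjoinRoot.powerBasis hirr.ne_zero).finrank, AdjoinRoot.powerBasis_dim,
        natDegree_X_pow_sub_C_mul_s9 (natDegree_map_le.trans_lt hgn)]
    rw [← Module.finrank_mul_finrank F E, hFE, hEL]
  have hf_minpoly :=
    minpoly.eq_of_natDegree_eq_finrank hgen hf_monic hfα (hf_deg.trans hfinrank.symm)
  exact ⟨f, hf_minpoly ▸ minpoly.irreducible (.of_finite F α), hf_deg, hf_map⟩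
end

section
/- Let m > 1, a ∈ F_q, and suppose q is odd or a ≠ 0. Then the map h(x) = x² + ax restricted to Z_m = { α ∈ F_{q^m} : F_q(α) = F_{q^m} } is exactly two-to-one; in particular its image has cardinality |Z_m|/2. -/
/-!
Since `γ² + aγ - (β² + aβ) = (γ - β)(γ - (-a - β))`, the fibre of `h` through a generator `β` is
`{β, -a - β}`, and `-a - β` generates the same field as `β`. The two points coincide only if
`2β = -a`: when `2 ≠ 0` this puts `β` in `F_q`, impossible for `m > 1`, and in characteristic 2
it forces `a = 0`. All fibres on `Z_m` thus have exactly two points, so `|Z_m| = 2 |h(Z_m)|`.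
-/

open IntermediateField

open Finset in
theorem Set.ncard_eq_mul_ncard_image_of_ncard_fiber {α β : Type*} {s : Set α} (hs : s.Finite)
    (f : α → β) {n : ℕ} (hn : ∀ x ∈ s, {y ∈ s | f y = f x}.ncard = n) :
    s.ncard = n * (f '' s).ncard := by
  classical
  have hfiber : ∀ b ∈ hs.toFinset.image f, #{a ∈ hs.toFinset | f a = b} = n := by
    intro _ hb
    obtain ⟨x, hx, rfl⟩ := Finset.mem_image.mp hb
    rw [← hn x (hs.mem_toFinset.mp hx), ← Set.ncard_coe_finset]
    congr 1
    ext
    simp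
  rw [Set.ncard_eq_toFinset_card s hs, Set.ncard_eq_toFinset_card _ (hs.image f),
    Set.Finite.toFinset_image _ hs]
  exact le_antisymm (card_le_mul_card_image _ n fun b hb ↦ (hfiber b hb).le)
    (mul_card_image_le_card _ n fun b hb ↦ (hfiber b hb).ge)

theorem sq_add_mul_eq_sq_add_mul_iff {R : Type*} [CommRing R] [NoZeroDivisors R] {c x y : R} :
    x ^ 2 + c * x = y ^ 2 + c * y ↔ x = y ∨ x = -c - y := by
  have hfactor : x ^ 2 + c * x - (y ^ 2 + c * y) = (x - y) * (x - (-c - y)) := by ring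
  rw [← sub_eq_zero, hfactor, mul_eq_zero, sub_eq_zero, sub_eq_zero]

section

variable {F E : Type*} [Field F] [Field E] [Algebra F E]

theorem IntermediateField.adjoin_simple_neg_algebraMap_sub (a : F) (β : E) :
    F⟮-algebraMap F E a - β⟯ = F⟮β⟯ := by
  have hmem {γ : E} (K : IntermediateField F E) (hγ : γ ∈ K) : -algebraMap F E a - γ ∈ K :=
    sub_mem (neg_mem (algebraMap_mem K a)) hγ
  refine le_antisymm ?_ ?_ <;> rw [adjoin_simple_le_iff]
  · exact hmem _ (mem_adjoin_simple_self F β)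
  · simpa using hmem _ (mem_adjoin_simple_self F (-algebraMap F E a - β))

theorem neg_algebraMap_sub_ne_self {a : F} {β : E} (hβ : β ∉ (⊥ : IntermediateField F E))
    (ha : (2 : F) ≠ 0 ∨ a ≠ 0) : -algebraMap F E a - β ≠ β := by
  intro h
  have h2β : algebraMap F E a = -(2 * β) := by linear_combination -h
  by_cases h2 : (2 : F) = 0
  · have hc : algebraMap F E a = 0 := by
      rw [h2β, ← map_ofNat (algebraMap F E) 2, h2, map_zero, zero_mul, neg_zero]
    exact ha.resolve_left (not_not.mpr h2) ((map_eq_zero _).mp hc)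
  · refine hβ (mem_bot.mpr ⟨-a / 2, ?_⟩)
    have h2E : (2 : E) ≠ 0 := by rwa [← map_ofNat (algebraMap F E) 2, map_ne_zero]
    rw [map_div₀, map_neg, h2β, map_ofNat]
    field_simp

theorem Module.finrank_eq_of_card_eq_pow [Fintype F] [Fintype E] {m : ℕ}
    (hE : Fintype.card E = Fintype.card F ^ m) : Module.finrank F E = m :=
  Nat.pow_right_injective (Fintype.one_lt_card (α := F)) (Module.card_eq_pow_finrank.symm.trans hE)

theorem setOf_adjoin_eq_top_sq_add_mul_eq (a : F) {β : E} (hβ : F⟮β⟯ = ⊤) :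
    {γ ∈ {α : E | F⟮α⟯ = ⊤} | γ ^ 2 + algebraMap F E a * γ = β ^ 2 + algebraMap F E a * β} =
      {β, -algebraMap F E a - β} := by
  ext γ
  simp only [Set.mem_ofPred_eq, Set.mem_insert_iff, Set.mem_singleton_iff,
    sq_add_mul_eq_sq_add_mul_iff]
  constructor
  · exact And.right
  · rintro (rfl | rfl)
    · exact ⟨hβ, .inl rfl⟩
    · exact ⟨(adjoin_simple_neg_algebraMap_sub a β).trans hβ, .inr rfl⟩

theorem ncard_setOf_adjoin_eq_top_sq_add_mul_eq (hrank : Module.finrank F E ≠ 1) {a : F}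
    (ha : (2 : F) ≠ 0 ∨ a ≠ 0) {β : E} (hβ : F⟮β⟯ = ⊤) :
    {γ ∈ {α : E | F⟮α⟯ = ⊤} | γ ^ 2 + algebraMap F E a * γ = β ^ 2 + algebraMap F E a * β}.ncard
      = 2 := by
  have hβ_bot : β ∉ (⊥ : IntermediateField F E) := fun h ↦
    hrank (bot_eq_top_iff_finrank_eq_one.mp ((adjoin_simple_eq_bot_iff.mpr h).symm.trans hβ))
  rw [setOf_adjoin_eq_top_sq_add_mul_eq a hβ]
  exact Set.ncard_pair (neg_algebraMap_sub_ne_self hβ_bot ha).symm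

end

theorem quadratic_map_two_to_one_on_generators_general
    (q m : ℕ) (hm : 1 < m)
    (F : Type*) [Field F] [Fintype F] (hF : Fintype.card F = q)
    (E : Type*) [Field E] [Fintype E] [Algebra F E] (hE : Fintype.card E = q ^ m)
    (a : F) (ha : Odd q ∨ a ≠ 0) :
    (∀ β ∈ {α : E | IntermediateField.adjoin F {α} = ⊤},
      Set.ncard {γ ∈ {α : E | IntermediateField.adjoin F {α} = ⊤} |
        γ ^ 2 + algebraMap F E a * γ = β ^ 2 + algebraMap F E a * β} = 2) ∧
    Set.ncard ((fun x : E => x ^ 2 + algebraMap F E a * x) ''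
        {α : E | IntermediateField.adjoin F {α} = ⊤}) =
      Set.ncard {α : E | IntermediateField.adjoin F {α} = ⊤} / 2 := by
  have hrank : Module.finrank F E ≠ 1 := by
    rw [Module.finrank_eq_of_card_eq_pow (hF ▸ hE)]
    omega
  have h2a : (2 : F) ≠ 0 ∨ a ≠ 0 := ha.imp_left fun hodd ↦ Ring.two_ne_zero fun hchar ↦ by
    rw [FiniteField.even_card_iff_char_two, hF, ← Nat.even_iff] at hchar
    exact Nat.not_even_iff_odd.mpr hodd hchar
  have hfiber := fun β (hβ : F⟮β⟯ = ⊤) ↦ ncard_setOf_adjoin_eq_top_sq_add_mul_eq hrank h2a hβ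
  refine ⟨hfiber, ?_⟩
  rw [Set.ncard_eq_mul_ncard_image_of_ncard_fiber (s := {α : E | F⟮α⟯ = ⊤}) (Set.toFinite _)
    (fun x ↦ x ^ 2 + algebraMap F E a * x) hfiber]
  omega

/-- If `m > 1`, `a ∈ F_q`, and `q` is odd or `a ≠ 0`, then `x ↦ x² + ax` restricted to
`Z_m = { α ∈ F_{q^m} : F_q(α) = F_{q^m} }` is exactly two-to-one, so its image has
cardinality `|Z_m|/2`. -/
theorem quadratic_map_two_to_one_on_generators
    (q m : ℕ) (hq : 1 < q) (hm : 1 < m)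
    (F : Type*) [Field F] [Fintype F] (hF : Fintype.card F = q)
    (E : Type*) [Field E] [Fintype E] [Algebra F E] (hE : Fintype.card E = q ^ m)
    (a : F) (ha : Odd q ∨ a ≠ 0) :
    (∀ β ∈ {α : E | IntermediateField.adjoin F {α} = ⊤},
      Set.ncard {γ ∈ {α : E | IntermediateField.adjoin F {α} = ⊤} |
        γ ^ 2 + algebraMap F E a * γ = β ^ 2 + algebraMap F E a * β} = 2) ∧
    Set.ncard ((fun x : E => x ^ 2 + algebraMap F E a * x) ''
        {α : E | IntermediateField.adjoin F {α} = ⊤}) =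
      Set.ncard {α : E | IntermediateField.adjoin F {α} = ⊤} / 2 :=
  quadratic_map_two_to_one_on_generators_general q m hm F hF E hE a ha
end

section
/- Over F_2, a monic polynomial f of degree 2m is a self-reciprocal irreducible polynomial if and only if f(X+1) is irreducible and can be written in the form (1+X)^m h(X²/(1+X)) (clearing denominators) for some monic h of degree m with h(0) ≠ 0. -/
/-!
Over `𝔽₂` the substitution `X ↦ X + 1` is an involution preserving irreducibility, and it turns
`(1 + X)^m h(X² / (1 + X))` into `X^m h(X + X⁻¹) = ∑ h_j X^(m-j) (X² + 1)^j`. These are exactly the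
self-reciprocal polynomials of degree at most `2m`: each `X^(m-j) (X² + 1)^j` is self-reciprocal
with leading term `X^(m+j)`, so a self-reciprocal polynomial can be peeled off term by term from the
top. Then `h` is monic of degree `m` because `f` is monic of degree `2m`, and `h(0) = f(1) ≠ 0`
(as `1² + 1 = 0`) because an irreducible `f` of degree `2m ≠ 1` has no root.
-/

open Polynomial Finset

/-- `(1+X)^m · h(X²/(1+X))` with denominators cleared:
`∑_{j=0}^{m} a_j X^{2j} (1+X)^{m-j}` where `h = ∑ a_j Y^j`. -/
noncomputable def tsrComp2 {F : Type*} [Field F] (m : ℕ) (h : Polynomial F) :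
    Polynomial F :=
  ∑ j ∈ Finset.range (m + 1), C (h.coeff j) * X ^ (2 * j) * (1 + X) ^ (m - j)

namespace Polynomial

section Semiring

variable {R : Type*} [Semiring R]

theorem reflect_pow {p : R[X]} {N : ℕ} (hp : p.natDegree ≤ N) (n : ℕ) :
    reflect (n * N) (p ^ n) = reflect N p ^ n := by
  induction n with
  | zero => simp
  | succ n ih =>
    rw [pow_succ, pow_succ, add_one_mul, reflect_mul _ _ (natDegree_pow_le_of_le n hp) hp, ih]

noncomputable def selfRecipTerm (m j : ℕ) : R[X] := X ^ (m - j) * (X ^ 2 + 1) ^ j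

theorem natDegree_selfRecipTerm_le {m j : ℕ} (hj : j ≤ m) :
    (selfRecipTerm m j : R[X]).natDegree ≤ m + j := by
  have : (selfRecipTerm m j : R[X]).natDegree ≤ m - j + j * 2 := by
    unfold selfRecipTerm
    compute_degree
  omega

theorem coeff_selfRecipTerm_add {m j : ℕ} (hj : j ≤ m) :
    (selfRecipTerm m j : R[X]).coeff (m + j) = 1 := by
  rw [selfRecipTerm, show m + j = j * 2 + (m - j) by omega, coeff_X_pow_mul,
    coeff_pow_of_natDegree_le (by compute_degree)]
  simp [coeff_one]

theorem reflect_selfRecipTerm {m j : ℕ} (hj : j ≤ m) :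
    reflect (2 * m) (selfRecipTerm m j : R[X]) = selfRecipTerm m j := by
  have hsq : reflect 2 (X ^ 2 + 1 : R[X]) = X ^ 2 + 1 := by
    rw [reflect_add, reflect_monomial, reflect_one, revAt_le le_rfl, Nat.sub_self, pow_zero,
      add_comm]
  have h2 : (X ^ 2 + 1 : R[X]).natDegree ≤ 2 := by compute_degree
  rw [selfRecipTerm, show 2 * m = 2 * (m - j) + j * 2 by omega,
    reflect_mul _ _ ((natDegree_X_pow_le _).trans (by omega)) (natDegree_pow_le_of_le j h2),
    reflect_monomial, reflect_pow h2, hsq, revAt_le (by omega)]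
  congr 2
  omega

/-- `X ^ m * h (X + X⁻¹)` with denominators cleared, `h` being truncated to degree `m`. -/
noncomputable def selfRecip (m : ℕ) (h : R[X]) : R[X] :=
  ∑ j ∈ range (m + 1), C (h.coeff j) * selfRecipTerm m j

theorem reflect_selfRecip (m : ℕ) (h : R[X]) :
    reflect (2 * m) (selfRecip m h) = selfRecip m h := by
  ext i
  rw [coeff_reflect, selfRecip, finsetSum_coeff, finsetSum_coeff]
  refine sum_congr rfl fun j hj => ?_
  rw [← coeff_reflect, reflect_C_mul, reflect_selfRecipTerm (mem_range_succ_iff.mp hj)]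

theorem selfRecip_add (m : ℕ) (g h : R[X]) :
    selfRecip m (g + h) = selfRecip m g + selfRecip m h := by
  simp only [selfRecip, coeff_add, C_add, add_mul, sum_add_distrib]

theorem selfRecip_C_mul_X_pow {m k : ℕ} (hk : k ≤ m) (c : R) :
    selfRecip m (C c * X ^ k) = C c * selfRecipTerm m k := by
  rw [selfRecip, sum_eq_single_of_mem k (mem_range_succ_iff.mpr hk)]
  · simp
  · intro j _ hjk
    simp [coeff_X_pow, hjk]

theorem coeff_selfRecip_two_mul (m : ℕ) (h : R[X]) :
    (selfRecip m h).coeff (2 * m) = h.coeff m := by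
  rw [selfRecip, finsetSum_coeff, sum_eq_single_of_mem m (self_mem_range_succ m), coeff_C_mul,
    two_mul, coeff_selfRecipTerm_add le_rfl, mul_one]
  intro j hj hjm
  have hj : j < m := lt_of_le_of_ne (mem_range_succ_iff.mp hj) hjm
  rw [coeff_C_mul, coeff_eq_zero_of_natDegree_lt
    ((natDegree_selfRecipTerm_le hj.le).trans_lt (by omega)), mul_zero]

end Semiring

section Ring

variable {R : Type*} [Ring R]

theorem eq_zero_of_reflect_eq_of_degree_lt {m : ℕ} {p : R[X]} (hp : p.degree < m)
    (hrefl : reflect (2 * m) p = p) : p = 0 := by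
  rw [degree_lt_iff_coeff_zero] at hp
  ext i
  rcases lt_or_ge i m with hi | hi
  · rw [← hrefl, coeff_reflect, revAt_le (by omega), hp _ (by omega), coeff_zero]
  · rw [hp i hi, coeff_zero]

theorem exists_selfRecip_eq_of_reflect_eq {m k : ℕ} (hk : k ≤ m + 1) {p : R[X]}
    (hp : p.degree < ↑(m + k)) (hrefl : reflect (2 * m) p = p) :
    ∃ h : R[X], h.degree < k ∧ p = selfRecip m h := by
  induction k generalizing p with
  | zero =>
    exact ⟨0, by simp, by simp [eq_zero_of_reflect_eq_of_degree_lt hp hrefl, selfRecip]⟩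
  | succ k ih =>
    set c := p.coeff (m + k)
    have hq : (p - C c * selfRecipTerm m k).degree < ↑(m + k) := by
      rw [degree_lt_iff_coeff_zero] at hp ⊢
      intro n hn
      rw [coeff_sub, coeff_C_mul]
      rcases hn.eq_or_lt with rfl | hn
      · rw [coeff_selfRecipTerm_add (by omega), mul_one, sub_self]
      · rw [hp n (by omega), coeff_eq_zero_of_natDegree_lt
          ((natDegree_selfRecipTerm_le (by omega)).trans_lt hn), mul_zero, sub_zero]
    obtain ⟨g, hg, hpg⟩ := ih (by omega) hq
      (by rw [reflect_sub, reflect_C_mul, reflect_selfRecipTerm (by omega), hrefl])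
    refine ⟨g + C c * X ^ k, ?_, ?_⟩
    · refine (degree_add_le _ _).trans_lt (max_lt (hg.trans ?_) ?_)
      · exact_mod_cast k.lt_succ_self
      · exact (degree_C_mul_X_pow_le k c).trans_lt (by exact_mod_cast k.lt_succ_self)
    · rw [selfRecip_add, selfRecip_C_mul_X_pow (by omega), ← hpg, sub_add_cancel]

end Ring

theorem eval_selfRecip_of_sq_add_one_eq_zero {R : Type*} [CommSemiring R] {x : R}
    (hx : x ^ 2 + 1 = 0) (m : ℕ) (h : R[X]) :
    (selfRecip m h).eval x = x ^ m * h.coeff 0 := by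
  rw [selfRecip, eval_finsetSum, sum_eq_single_of_mem 0 (by simp)]
  · rw [eval_mul, eval_C, selfRecipTerm, Nat.sub_zero, pow_zero, mul_one, eval_pow, eval_X,
      mul_comm]
  · intro j _ hj
    rw [selfRecipTerm, eval_mul, eval_mul, eval_pow, eval_pow, eval_add, eval_pow, eval_X,
      eval_one, hx, zero_pow hj, mul_zero, mul_zero]

theorem irreducible_taylor_iff {R : Type*} [CommRing R] {r : R} {p : R[X]} :
    Irreducible (taylor r p) ↔ Irreducible p :=
  MulEquiv.irreducible_iff (taylorEquiv r)

section CharTwo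

theorem taylor_one_taylor_one {R : Type*} [CommRing R] [CharP R 2] (p : R[X]) :
    taylor 1 (taylor 1 p) = p := by
  rw [taylor_taylor, CharTwo.add_self_eq_zero, taylor_zero]

variable {F : Type*} [Field F] [CharP F 2]

theorem taylor_one_tsrComp2 (m : ℕ) (h : F[X]) :
    taylor 1 (tsrComp2 m h) = selfRecip m h := by
  have hX : (C 1 + (X + C 1) : F[X]) = X := by
    rw [add_left_comm, CharTwo.add_self_eq_zero, add_zero]
  have hsq : (X + C 1 : F[X]) ^ 2 = X ^ 2 + 1 := by
    rw [CharTwo.add_sq, ← C_pow, one_pow, C_1]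
  simp only [tsrComp2, selfRecip, selfRecipTerm, map_sum, taylor_mul, taylor_pow, map_add,
    taylor_one, taylor_C, taylor_X, hX, pow_mul, hsq]
  refine sum_congr rfl fun j _ => ?_
  ring

theorem taylor_one_eq_tsrComp2_iff {m : ℕ} {f h : F[X]} :
    taylor 1 f = tsrComp2 m h ↔ f = selfRecip m h := by
  rw [← taylor_one_tsrComp2]
  exact ⟨fun hf => by rw [← hf, taylor_one_taylor_one],
    fun hf => by rw [hf, taylor_one_taylor_one]⟩

end CharTwo

end Polynomial

theorem srim_iff_comp_decomposable_general
    (m : ℕ) (f : Polynomial (ZMod 2))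
    (hmonic : f.Monic) (hdeg : f.natDegree = 2 * m) :
    (Irreducible f ∧ f.reverse = f) ↔
      (Irreducible (f.comp (X + 1)) ∧
        ∃ h : Polynomial (ZMod 2), h.Monic ∧ h.natDegree = m ∧ h.coeff 0 ≠ 0 ∧
          f.comp (X + 1) = tsrComp2 m h) := by
  have hrev : f.reverse = reflect (2 * m) f := by rw [reverse, hdeg]
  rw [← C_1, ← taylor_apply, irreducible_taylor_iff, hrev]
  simp_rw [taylor_one_eq_tsrComp2_iff]
  constructor
  · rintro ⟨hirr, hrefl⟩
    obtain ⟨h, hlt, rfl⟩ := exists_selfRecip_eq_of_reflect_eq (k := m + 1) le_rfl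
      (degree_le_natDegree.trans_lt (by rw [hdeg]; exact_mod_cast (by omega))) hrefl
    have hcoeff : h.coeff m = 1 := by
      rw [← coeff_selfRecip_two_mul, ← hdeg, hmonic.coeff_natDegree]
    have hle : h.natDegree ≤ m := natDegree_le_of_degree_le (Order.le_of_lt_succ hlt)
    refine ⟨hirr, h, monic_of_natDegree_le_of_coeff_eq_one m hle hcoeff,
      natDegree_eq_of_le_of_coeff_ne_zero hle (by simp [hcoeff]), ?_, rfl⟩
    have hroot := hirr.not_isRoot_of_natDegree_ne_one (x := 1) (by omega)
    rwa [IsRoot, eval_selfRecip_of_sq_add_one_eq_zero (by decide), one_pow, one_mul] at hroot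
  · rintro ⟨hirr, h, -, -, -, rfl⟩
    exact ⟨hirr, reflect_selfRecip m h⟩

/-- Over `F_2`, a monic polynomial `f` of degree `2m` is self-reciprocal irreducible if
and only if `f(X+1)` is irreducible and of the form `(1+X)^m h(X²/(1+X))` for some monic
`h` of degree `m` with `h(0) ≠ 0`. -/
theorem srim_iff_comp_decomposable
    (m : ℕ) (hm : 0 < m) (f : Polynomial (ZMod 2))
    (hmonic : f.Monic) (hdeg : f.natDegree = 2 * m) :
    (Irreducible f ∧ f.reverse = f) ↔
      (Irreducible (f.comp (X + 1)) ∧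
        ∃ h : Polynomial (ZMod 2), h.Monic ∧ h.natDegree = m ∧ h.coeff 0 ≠ 0 ∧
          f.comp (X + 1) = tsrComp2 m h) :=
  srim_iff_comp_decomposable_general m f hmonic hdeg
end
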